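/- arXiv:2601.16450 — 2 statements merged into one kernel-verified Lean document; each statement's English description precedes it below -/
import Mathlib

section
/- Suppose p = 2. Then in floating-point arithmetic, (1^+ ⊕ 1) ⊕ 1^+ = (1 ⊕ 1^+) ⊕ 1^+ = 3 and (1^+ ⊕ 1^+) ⊕ 1 = 3^+, where 1^+ = 1 + 2^{−2} and 3^+ = 3 + 2^{−1}. Furthermore, for every x ∈ 𝔽 with 1 < x ≤ 2 there exists y ∈ 𝔽 with 2^{−1} ≤ y < 1 such that x ⊗ y = 1. -/
open scoped Classical

namespace FPT

noncomputable section

/-- Minimal exponent `𝔢_min = -2^(q-1) + 2`. -/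
def emin (q : ℕ) : ℤ := -(2 ^ (q - 1) : ℤ) + 2

/-- Maximal exponent `𝔢_max = 2^(q-1) - 1`. -/
def emax (q : ℕ) : ℤ := (2 ^ (q - 1) : ℤ) - 1

/-- The set of finite floating-point numbers with `p` mantissa bits and exponent bits `q`:
normal numbers `±(1.m₁⋯m_p)·2^e = m·2^(e-p)` with `2^p ≤ |m| ≤ 2^(p+1)-1` and
`emin ≤ e ≤ emax`, together with subnormal numbers `±(0.m₁⋯m_p)·2^emin = m·2^(emin-p)`
with `|m| ≤ 2^p - 1`. -/
def Fset (p q : ℕ) : Set ℝ :=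
  {x | ∃ m e : ℤ, |m| ≤ 2 ^ (p + 1) - 1 ∧ emin q ≤ e ∧ e ≤ emax q ∧
      ((2 : ℤ) ^ p ≤ |m| ∨ e = emin q) ∧ x = (m : ℝ) * (2 : ℝ) ^ (e - (p : ℤ))}

/-- The largest positive float `Ω = (2 - 2^(-p))·2^emax`. -/
def Omega (p q : ℕ) : ℝ := (2 - (2 : ℝ) ^ (-(p : ℤ))) * (2 : ℝ) ^ (emax q)

/-- Overflow threshold `Ω + 2^(emax - p - 1)`. -/
def thr (p q : ℕ) : ℝ := Omega p q + (2 : ℝ) ^ (emax q - (p : ℤ) - 1)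

/-- `y` is a float whose last mantissa bit `m_p` is zero, i.e. `y = m·2^(e-p)` with `m` even. -/
def EvenMantissa (p q : ℕ) (y : ℝ) : Prop :=
  ∃ m e : ℤ, |m| ≤ 2 ^ (p + 1) - 1 ∧ emin q ≤ e ∧ e ≤ emax q ∧
    ((2 : ℤ) ^ p ≤ |m| ∨ e = emin q) ∧ y = (m : ℝ) * (2 : ℝ) ^ (e - (p : ℤ)) ∧ 2 ∣ m

/-- `RoundsTo p q x y` : `y` is the rounding of `x` to the nearest float, ties to even. -/
def RoundsTo (p q : ℕ) (x y : ℝ) : Prop :=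
  y ∈ Fset p q ∧ (∀ z ∈ Fset p q, |x - y| ≤ |x - z|) ∧
    ((∀ z ∈ Fset p q, |x - z| = |x - y| → z = y) ∨ EvenMantissa p q y)

/-- Extended floats `𝔽̄ = 𝔽 ∪ {-∞, +∞, NaN}` (the payload of `fin` is meant to lie in `Fset`). -/
inductive EF where
  | fin : ℝ → EF
  | pinf : EF
  | ninf : EF
  | nan : EF

/-- Rounding `⌊·⌉ : ℝ → 𝔽̄`. -/
def rnd (p q : ℕ) (x : ℝ) : EF :=
  if thr p q ≤ x then .pinf
  else if x ≤ -thr p q then .ninf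
  else .fin (Classical.epsilon (RoundsTo p q x))

/-- Floating-point addition `⊕`. -/
def fadd (p q : ℕ) : EF → EF → EF
  | .nan, _ => .nan
  | _, .nan => .nan
  | .fin x, .fin y => rnd p q (x + y)
  | .fin _, .pinf => .pinf
  | .fin _, .ninf => .ninf
  | .pinf, .fin _ => .pinf
  | .ninf, .fin _ => .ninf
  | .pinf, .pinf => .pinf
  | .ninf, .ninf => .ninf
  | .pinf, .ninf => .nan
  | .ninf, .pinf => .nan

/-- Floating-point multiplication `⊗`. -/
def fmul (p q : ℕ) : EF → EF → EF
  | .nan, _ => .nan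
  | _, .nan => .nan
  | .fin x, .fin y => rnd p q (x * y)
  | .fin x, .pinf => if 0 < x then .pinf else if x < 0 then .ninf else .nan
  | .fin x, .ninf => if 0 < x then .ninf else if x < 0 then .pinf else .nan
  | .pinf, .fin y => if 0 < y then .pinf else if y < 0 then .ninf else .nan
  | .ninf, .fin y => if 0 < y then .ninf else if y < 0 then .pinf else .nan
  | .pinf, .pinf => .pinf
  | .ninf, .ninf => .pinf
  | .pinf, .ninf => .ninf
  | .ninf, .pinf => .ninf

/-- Floating-point subtraction `x ⊖ y = x ⊕ ((-1) ⊗ y)`. -/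
def fsub (p q : ℕ) (x y : EF) : EF := fadd p q x (fmul p q (.fin (-1)) y)

/-- Floating-point division (defined for `0 ≤ x ≤ y < ∞`, `y > 0`; NaN propagates). -/
def fdiv (p q : ℕ) : EF → EF → EF
  | _, .nan => .nan
  | .nan, _ => .nan
  | .fin x, .fin y => if 0 < y then rnd p q (x / y) else .nan
  | _, _ => .nan

/-- Correctly rounded exponential `⌊exp⌉`. -/
def fexp (p q : ℕ) : EF → EF
  | .fin x => rnd p q (Real.exp x)
  | .pinf => .pinf
  | .ninf => .fin 0
  | .nan => .nan

/-- Correctly rounded ReLU `ρ = ⌊ReLU⌉`. -/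
def frelu (p q : ℕ) : EF → EF
  | .fin x => rnd p q (max x 0)
  | .pinf => .pinf
  | .ninf => .fin 0
  | .nan => .nan

/-- Left-associative floating-point sum of a list (empty sum is `0`). -/
def fsuml (p q : ℕ) : List EF → EF
  | [] => .fin 0
  | x :: xs => xs.foldl (fadd p q) x

/-- Left-associative floating-point sum `⊕_{i=1}^{n} v i` over `Fin n`. -/
def fsum (p q : ℕ) {n : ℕ} (v : Fin n → EF) : EF := fsuml p q ((List.finRange n).map v)

/-- Matrices of extended floats. -/
abbrev Mat (a b : ℕ) := Fin a → Fin b → EF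

/-- Entrywise floating-point matrix addition. -/
def madd (p q : ℕ) {a b : ℕ} (M N : Mat a b) : Mat a b := fun i j => fadd p q (M i j) (N i j)

/-- Floating-point matrix multiplication with left-associative inner sums. -/
def mmul (p q : ℕ) {a b c : ℕ} (M : Mat a b) (N : Mat b c) : Mat a c :=
  fun i k => fsum p q (fun j => fmul p q (M i j) (N j k))

/-- Maximum of two extended floats (NaN-propagating). -/
def emax2 : EF → EF → EF
  | .nan, _ => .nan
  | _, .nan => .nan
  | .pinf, _ => .pinf
  | _, .pinf => .pinf
  | .fin x, .fin y => .fin (max x y)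
  | .fin x, .ninf => .fin x
  | .ninf, y => y

/-- Maximum entry of a vector of extended floats. -/
def vmax {n : ℕ} (v : Fin n → EF) : EF := ((List.finRange n).map v).foldl emax2 .ninf

/-- Floating-point softmax `σ(x)_i = ⌊exp⌉(x_i ⊖ x_*) ⊘ (⊕_j ⌊exp⌉(x_j ⊖ x_*))`. -/
def fsoftmax (p q : ℕ) {n : ℕ} (v : Fin n → EF) : Fin n → EF := fun i =>
  fdiv p q (fexp p q (fsub p q (v i) (vmax v)))
    (fsum p q (fun j => fexp p q (fsub p q (v j) (vmax v))))

/-- Column-wise application of the floating-point softmax. -/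
def colSoftmax (p q : ℕ) {k n : ℕ} (A : Mat k n) : Mat k n :=
  fun i j => fsoftmax p q (fun i' => A i' j) i

/-- The extended float is a finite float in `𝔽`. -/
def EF.IsF (p q : ℕ) : EF → Prop
  | .fin x => x ∈ Fset p q
  | _ => False

/-- The extended float is a well-formed element of `𝔽̄`. -/
def EF.Valid (p q : ℕ) : EF → Prop
  | .fin x => x ∈ Fset p q
  | _ => True

/-- The extended float is finite (not `±∞` or NaN). -/
def EF.Finite : EF → Prop
  | .fin _ => True
  | _ => False

/-- All entries of a vector are finite floats. -/
def VecFin (p q : ℕ) {a : ℕ} (v : Fin a → EF) : Prop := ∀ i, (v i).IsF p q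

/-- All entries of a matrix are finite floats. -/
def MatFin (p q : ℕ) {a b : ℕ} (M : Mat a b) : Prop := ∀ i j, (M i j).IsF p q

/-- Embed a real matrix as a matrix of extended floats. -/
def toEF {a b : ℕ} (M : Fin a → Fin b → ℝ) : Mat a b := fun i j => .fin (M i j)

/-- Parameters of one transformer block (attention layer followed by feed-forward layer)
with `h` heads, head dimension `m`, feed-forward width `r`, hidden dimension `d`. -/
structure Block (h m r d : ℕ) where
  WK : Fin h → Fin m → Fin d → ℝ
  WQ : Fin h → Fin m → Fin d → ℝ
  WV : Fin h → Fin m → Fin d → ℝ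
  WO : Fin h → Fin d → Fin m → ℝ
  W1 : Fin r → Fin d → ℝ
  W2 : Fin d → Fin r → ℝ
  b1 : Fin r → ℝ
  b2 : Fin d → ℝ

/-- All parameters of the block are floats. -/
def Block.Valid (p q : ℕ) {h m r d : ℕ} (B : Block h m r d) : Prop :=
  (∀ i a b, B.WK i a b ∈ Fset p q) ∧ (∀ i a b, B.WQ i a b ∈ Fset p q) ∧
    (∀ i a b, B.WV i a b ∈ Fset p q) ∧ (∀ i a b, B.WO i a b ∈ Fset p q) ∧
    (∀ a b, B.W1 a b ∈ Fset p q) ∧ (∀ a b, B.W2 a b ∈ Fset p q) ∧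
    (∀ a, B.b1 a ∈ Fset p q) ∧ (∀ a, B.b2 a ∈ Fset p q)

/-- The attention layer
`AT(X) = X ⊕ (⊕_i W_i^O ⊗ ((W_i^V ⊗ X) ⊗ σ((W_i^K ⊗ X)ᵀ ⊗ (W_i^Q ⊗ X))))`. -/
def attnApply (p q : ℕ) {h m r d : ℕ} (B : Block h m r d) {n : ℕ} (X : Mat d n) : Mat d n :=
  madd p q X (fun a b =>
    fsum p q (fun i =>
      (mmul p q (toEF (B.WO i))
        (mmul p q (mmul p q (toEF (B.WV i)) X)
          (colSoftmax p q
            (mmul p q (fun u v => mmul p q (toEF (B.WK i)) X v u)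
              (mmul p q (toEF (B.WQ i)) X))))) a b))

/-- The feed-forward layer `FF(X) = X ⊕ (W₂ ⊗ ρ(W₁ ⊗ X ⊕ b₁1ᵀ) ⊕ b₂1ᵀ)`. -/
def ffApply (p q : ℕ) {h m r d : ℕ} (B : Block h m r d) {n : ℕ} (X : Mat d n) : Mat d n :=
  madd p q X
    (madd p q
      (mmul p q (toEF B.W2)
        (fun i j => frelu p q
          ((madd p q (mmul p q (toEF B.W1) X) (fun a _ => .fin (B.b1 a))) i j)))
      (fun a _ => .fin (B.b2 a)))

/-- One transformer block: `FF ∘ AT`. -/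
def Block.apply (p q : ℕ) {h m r d n : ℕ} (B : Block h m r d) (X : Mat d n) : Mat d n :=
  ffApply p q B (attnApply p q B X)

/-- Composition of a list of transformer blocks (applied from left to right). -/
def blocksApply (p q : ℕ) {h m r d n : ℕ} (L : List (Block h m r d)) (X : Mat d n) : Mat d n :=
  L.foldl (fun Y B => Block.apply p q B Y) X

/-- `f` is a floating-point transformer:
`f(X) = W_out ⊗ g(W_in ⊗ X ⊕ b_in 1ᵀ) ⊕ b_out 1ᵀ` with `g` a nonempty composition of
transformer blocks and all parameters finite floats. -/
def IsTransformer (p q din dout n : ℕ) (f : Mat din n → Mat dout n) : Prop :=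
  ∃ (h m r d : ℕ) (L : List (Block h m r d)) (Win : Fin d → Fin din → ℝ) (bin : Fin d → ℝ)
      (Wout : Fin dout → Fin d → ℝ) (bout : Fin dout → ℝ),
    0 < h ∧ 0 < m ∧ 0 < r ∧ 0 < d ∧ L ≠ [] ∧ (∀ B ∈ L, B.Valid p q) ∧
      (∀ i j, Win i j ∈ Fset p q) ∧ (∀ i, bin i ∈ Fset p q) ∧
      (∀ i j, Wout i j ∈ Fset p q) ∧ (∀ i, bout i ∈ Fset p q) ∧
      ∀ X : Mat din n,
        f X = madd p q
          (mmul p q (toEF Wout)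
            (blocksApply p q L
              (madd p q (mmul p q (toEF Win) X) (fun i _ => .fin (bin i)))))
          (fun i _ => .fin (bout i))

/-- Column permutation: column `j` of `permCols π X` is column `π j` of `X`. -/
def permCols {a n : ℕ} (π : Equiv.Perm (Fin n)) (X : Mat a n) : Mat a n := fun i j => X i (π j)

/-- The transposition `π_{(1,2)}^n` of the first two coordinates. -/
def swap12 (n : ℕ) (hn : 2 ≤ n) : Equiv.Perm (Fin n) :=
  Equiv.swap ⟨0, by omega⟩ ⟨1, by omega⟩

/-- The columns of `X` are pairwise distinct. -/
def DistinctCols {a n : ℕ} (X : Mat a n) : Prop :=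
  ∀ j k : Fin n, j ≠ k → ∃ i, X i j ≠ X i k

/-- `(α,β)`-similarity (with 1-based column index `i = j+1`). -/
def Similar {a n : ℕ} (α β : ℕ) (X Y : Mat a n) : Prop :=
  ∃ z1 z2 : Fin a → EF,
    (∀ j : Fin n, (j : ℕ) + 1 ≤ α → ∀ i, X i j = z1 i) ∧
    (∀ j : Fin n, α < (j : ℕ) + 1 → (j : ℕ) + 1 ≤ β → ∀ i, X i j = z2 i) ∧
    (∀ j : Fin n, (j : ℕ) + 1 < α → ∀ i, Y i j = z1 i) ∧
    (∀ j : Fin n, α ≤ (j : ℕ) + 1 → (j : ℕ) + 1 ≤ β → ∀ i, Y i j = z2 i) ∧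
    (∀ j : Fin n, β < (j : ℕ) + 1 → ∀ i, X i j = Y i j)

/-- The smallest float strictly greater than `x` (junk value if none exists). -/
def succF (p q : ℕ) (x : ℝ) : ℝ := sInf {y | y ∈ Fset p q ∧ x < y}

/-- Successor on extended floats: the smallest element of `𝔽 ∪ {+∞}` strictly above. -/
def succEF (p q : ℕ) : EF → EF
  | .fin r => if ∃ y ∈ Fset p q, r < y then .fin (succF p q r) else .pinf
  | e => e

/-- Floating-point affine transformation `φ(x) = W ⊗ x ⊕ b`. -/
def affApply (p q : ℕ) {a b : ℕ} (W : Fin b → Fin a → ℝ) (c : ℝ) (v : Fin a → EF) :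
    Fin b → EF :=
  fun i => fadd p q (fsum p q (fun j => fmul p q (.fin (W i j)) (v j))) (.fin c)

/-- All intermediate values of `φ(x) = W ⊗ x ⊕ b` on input `v`, including every
left-associative partial sum of the matrix–vector product, are finite. -/
def AffIntermFin (p q : ℕ) {a b : ℕ} (W : Fin b → Fin a → ℝ) (c : ℝ) (v : Fin a → EF) : Prop :=
  ∀ i : Fin b,
    (∀ k : ℕ,
      (fsuml p q (((List.finRange a).take k).map
        (fun j => fmul p q (.fin (W i j)) (v j)))).Finite) ∧
    (affApply p q W c v i).Finite

end
end FPT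
section Aux

open FPT

lemma two_pow_big {q : ℕ} (hpq : (2 : ℤ) ≤ 2 ^ (q - 1) - 3) : (5:ℤ) ≤ 2 ^ (q-1) := by omega

lemma emin_le {q : ℕ} (hq : (5:ℤ) ≤ 2 ^ (q-1)) : emin q ≤ -3 := by unfold emin; omega

lemma emax_ge {q : ℕ} (hq : (5:ℤ) ≤ 2 ^ (q-1)) : 4 ≤ emax q := by unfold emax; omega

lemma rep_analysis (q : ℕ) (hq : (5:ℤ) ≤ 2 ^ (q - 1)) {z : ℝ} {m e : ℤ}
    (hm : |m| ≤ 2 ^ (2 + 1) - 1) (hcond : (2:ℤ) ^ 2 ≤ |m| ∨ e = emin q)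
    (hze : z = (m:ℝ) * (2:ℝ) ^ (e - ((2:ℕ):ℤ)))
    (h1 : 1/2 ≤ z) (h2 : z ≤ 4) :
    ∃ k : ℤ, z = (k:ℝ)/8 ∧ 4 ≤ k ∧ k ≤ 32 ∧ (8 < k → 2 ∣ k) ∧ (16 < k → 4 ∣ k) ∧
      (2 ∣ m → ((8 < k → 4 ∣ k) ∧ (16 < k → 8 ∣ k))) := by
  have hemin : emin q ≤ -3 := emin_le hq
  have hz0 : (0:ℝ) < z := by linarith
  have hc2 : ((2:ℕ):ℤ) = 2 := by norm_num
  rw [hc2] at hze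
  have hp : (0:ℝ) < (2:ℝ) ^ (e - 2) := zpow_pos two_pos _
  have hm0 : 0 < m := by
    by_contra h
    push_neg at h
    have hmr : (m:ℝ) ≤ 0 := by exact_mod_cast h
    nlinarith
  have hm7 : m ≤ 7 := by rw [abs_of_pos hm0] at hm; omega
  have hm7r : (m:ℝ) ≤ 7 := by exact_mod_cast hm7
  have hzu : z ≤ 7 * (2:ℝ) ^ (e - 2) := by
    rw [hze]; exact mul_le_mul_of_nonneg_right hm7r hp.le
  have he3 : -2 ≤ e := by
    by_contra h
    push_neg at h
    have hle : (2:ℝ) ^ (e - 2) ≤ 2 ^ (-5 : ℤ) :=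
      zpow_le_zpow_right₀ one_le_two (by omega)
    have h5 : (2:ℝ) ^ (-5:ℤ) = 1/32 := by norm_num
    rw [h5] at hle
    linarith
  have hm4 : 4 ≤ m := by
    rcases hcond with h | h
    · rw [abs_of_pos hm0] at h; omega
    · omega
  have hm4r : (4:ℝ) ≤ m := by exact_mod_cast hm4
  have hzl : 4 * (2:ℝ) ^ (e - 2) ≤ z := by
    rw [hze]; exact mul_le_mul_of_nonneg_right hm4r hp.le
  have he2 : e ≤ 2 := by
    by_contra h
    push_neg at h
    have hge : (2:ℝ)^(1:ℤ) ≤ 2^(e-2) := zpow_le_zpow_right₀ one_le_two (by omega)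
    have h1' : (2:ℝ)^(1:ℤ) = 2 := by norm_num
    rw [h1'] at hge
    linarith
  have he1 : -1 ≤ e := by
    by_contra h
    push_neg at h
    have hle : (2:ℝ) ^ (e - 2) ≤ 2 ^ (-4:ℤ) :=
      zpow_le_zpow_right₀ one_le_two (by omega)
    have h4 : (2:ℝ) ^ (-4:ℤ) = 1/16 := by norm_num
    rw [h4] at hle
    linarith
  interval_cases e
  · refine ⟨m, ?_, by omega, by omega, by omega, by omega, fun _ => ⟨by omega, by omega⟩⟩
    rw [hze]; push_cast; norm_num; try ring
  · refine ⟨2*m, ?_, by omega, by omega, by omega, by omega,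
      fun hd => ⟨by omega, by omega⟩⟩
    rw [hze]; push_cast; norm_num; try ring
  · refine ⟨4*m, ?_, by omega, by omega, by omega, by omega,
      fun hd => ⟨by omega, by omega⟩⟩
    rw [hze]; push_cast; norm_num; try ring
  · have hz4 : z = (m:ℝ) := by rw [hze]; norm_num
    have : (m:ℝ) ≤ 4 := by linarith
    have hmm : m ≤ 4 := by exact_mod_cast this
    refine ⟨8*m, ?_, by omega, by omega, by omega, by omega,
      fun hd => ⟨by omega, by omega⟩⟩
    rw [hze]; push_cast; norm_num; try ring

lemma mem_cases (q : ℕ) (hq : (5:ℤ) ≤ 2 ^ (q - 1)) {z : ℝ} (hz : z ∈ Fset 2 q)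
    (h1 : 1/2 ≤ z) (h2 : z ≤ 4) :
    ∃ k : ℤ, z = (k:ℝ)/8 ∧ 4 ≤ k ∧ k ≤ 32 ∧ (8 < k → 2 ∣ k) ∧ (16 < k → 4 ∣ k) := by
  obtain ⟨m, e, hm, _, _, hcond, hze⟩ := hz
  obtain ⟨k, h⟩ := rep_analysis q hq hm hcond hze h1 h2
  exact ⟨k, h.1, h.2.1, h.2.2.1, h.2.2.2.1, h.2.2.2.2.1⟩

lemma not_even_aux (q : ℕ) (hq : (5:ℤ) ≤ 2 ^ (q - 1)) {z : ℝ}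
    (hz : EvenMantissa 2 q z) (h1 : 1/2 ≤ z) (h2 : z ≤ 4) :
    ∃ k : ℤ, z = (k:ℝ)/8 ∧ (8 < k → 4 ∣ k) ∧ (16 < k → 8 ∣ k) := by
  obtain ⟨m, e, hm, _, _, hcond, hze, hdvd⟩ := hz
  obtain ⟨k, hk, _, _, _, _, hpar⟩ := rep_analysis q hq hm hcond hze h1 h2
  exact ⟨k, hk, (hpar hdvd).1, (hpar hdvd).2⟩

lemma k_of_eq {z : ℝ} {k : ℤ} (hk : z = (k:ℝ)/8) {n : ℤ} (hz : z = (n:ℝ)/8) : k = n := by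
  have : (k:ℝ) = n := by rw [hk] at hz; linarith
  exact_mod_cast this

lemma not_even_5_2 (q : ℕ) (hq : (5:ℤ) ≤ 2 ^ (q - 1)) : ¬ EvenMantissa 2 q (5/2) := by
  intro h
  obtain ⟨k, hk, _, h16⟩ := not_even_aux q hq h (by norm_num) (by norm_num)
  have hk20 : k = 20 := k_of_eq hk (by norm_num)
  omega

lemma not_even_7_2 (q : ℕ) (hq : (5:ℤ) ≤ 2 ^ (q - 1)) : ¬ EvenMantissa 2 q (7/2) := by
  intro h
  obtain ⟨k, hk, _, h16⟩ := not_even_aux q hq h (by norm_num) (by norm_num)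
  have hk28 : k = 28 := k_of_eq hk (by norm_num)
  omega

lemma not_even_5_4 (q : ℕ) (hq : (5:ℤ) ≤ 2 ^ (q - 1)) : ¬ EvenMantissa 2 q (5/4) := by
  intro h
  obtain ⟨k, hk, h8, _⟩ := not_even_aux q hq h (by norm_num) (by norm_num)
  have hk10 : k = 10 := k_of_eq hk (by norm_num)
  omega

lemma mem_Fset_of (q : ℕ) (hq : (5:ℤ) ≤ 2 ^ (q - 1)) (m e : ℤ) (hm1 : 4 ≤ m) (hm2 : m ≤ 7)
    (he1 : -1 ≤ e) (he2 : e ≤ 2) {x : ℝ} (hx : x = (m:ℝ) * (2:ℝ) ^ (e - 2)) :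
    x ∈ Fset 2 q := by
  have h1 := emin_le hq
  have h2 := emax_ge hq
  refine ⟨m, e, ?_, by omega, by omega, Or.inl ?_, ?_⟩
  · rw [abs_of_pos (by omega : (0:ℤ) < m)]; omega
  · rw [abs_of_pos (by omega : (0:ℤ) < m)]; omega
  · rw [hx]; norm_num

lemma even_of (q : ℕ) (hq : (5:ℤ) ≤ 2 ^ (q - 1)) (m e : ℤ) (hm1 : 4 ≤ m) (hm2 : m ≤ 7)
    (he1 : -1 ≤ e) (he2 : e ≤ 2) (hd : 2 ∣ m) {x : ℝ}
    (hx : x = (m:ℝ) * (2:ℝ) ^ (e - 2)) : EvenMantissa 2 q x := by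
  have h1 := emin_le hq
  have h2 := emax_ge hq
  refine ⟨m, e, ?_, by omega, by omega, Or.inl ?_, ?_, hd⟩
  · rw [abs_of_pos (by omega : (0:ℤ) < m)]; omega
  · rw [abs_of_pos (by omega : (0:ℤ) < m)]; omega
  · rw [hx]; norm_num

lemma thr_big (q : ℕ) (hq : (5:ℤ) ≤ 2 ^ (q - 1)) : (4:ℝ) < thr 2 q := by
  unfold thr Omega
  have h1 : (16:ℝ) ≤ 2 ^ (emax q) := by
    calc (16:ℝ) = 2^(4:ℤ) := by norm_num
    _ ≤ _ := zpow_le_zpow_right₀ one_le_two (emax_ge hq)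
  have h2 : (0:ℝ) < 2 ^ (emax q - ((2:ℕ):ℤ) - 1) := zpow_pos two_pos _
  have h3 : (2:ℝ) - 2 ^ (-((2:ℕ):ℤ)) = 7/4 := by norm_num
  rw [h3]
  set X := (2:ℝ) ^ (emax q) with hX
  set Y := (2:ℝ) ^ (emax q - ((2:ℕ):ℤ) - 1) with hY
  linarith [h1, h2]

lemma rnd_eq_fin (p q : ℕ) (x y : ℝ) (h1 : ¬ thr p q ≤ x) (h2 : ¬ x ≤ -thr p q)
    (hy : RoundsTo p q x y) (huniq : ∀ y', RoundsTo p q x y' → y' = y) :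
    rnd p q x = .fin y := by
  unfold rnd
  rw [if_neg h1, if_neg h2]
  exact congrArg EF.fin (huniq _ (Classical.epsilon_spec ⟨y, hy⟩))

lemma rnd_strict (p q : ℕ) (x y : ℝ) (h1 : ¬ thr p q ≤ x) (h2 : ¬ x ≤ -thr p q)
    (hyF : y ∈ Fset p q)
    (hmin : ∀ z ∈ Fset p q, |x - y| ≤ |x - z|)
    (hstrict : ∀ z ∈ Fset p q, |x - z| = |x - y| → z = y) :
    rnd p q x = .fin y := by
  refine rnd_eq_fin p q x y h1 h2 ⟨hyF, hmin, Or.inl hstrict⟩ ?_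
  rintro y' ⟨hF, hmin', _⟩
  exact hstrict y' hF (le_antisymm (hmin' y hyF) (hmin y' hF))

lemma rnd_exact (p q : ℕ) (y : ℝ) (h1 : ¬ thr p q ≤ y) (h2 : ¬ y ≤ -thr p q)
    (hyF : y ∈ Fset p q) : rnd p q y = .fin y := by
  refine rnd_strict p q y y h1 h2 hyF (fun z _ => by simp) (fun z _ hz => ?_)
  have h0 : |y - z| = 0 := by simpa using hz
  have := sub_eq_zero.mp (abs_eq_zero.mp h0)
  exact this.symm

lemma rnd_tie (p q : ℕ) (x y y2 : ℝ) (h1 : ¬ thr p q ≤ x) (h2 : ¬ x ≤ -thr p q)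
    (hyF : y ∈ Fset p q)
    (heq : |x - y2| = |x - y|)
    (hmin : ∀ z ∈ Fset p q, |x - y| ≤ |x - z|)
    (hpair : ∀ z, |x - z| = |x - y| → z = y ∨ z = y2)
    (heven : EvenMantissa p q y) (hodd : ¬ EvenMantissa p q y2) :
    rnd p q x = .fin y := by
  refine rnd_eq_fin p q x y h1 h2 ⟨hyF, hmin, Or.inr heven⟩ ?_
  rintro y' ⟨hF, hmin', hc⟩
  have heq' : |x - y'| = |x - y| := le_antisymm (hmin' y hyF) (hmin y' hF)
  rcases hpair y' heq' with h | h
  · exact h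
  · subst h
    rcases hc with hl | he
    · exact (hl y hyF (heq.symm)).symm
    · exact absurd he hodd

end Aux
section Main

open FPT

lemma no_float_in (q : ℕ) (hq : (5:ℤ) ≤ 2 ^ (q - 1)) {z a b : ℝ} (hz : z ∈ Fset 2 q)
    (ha : 1 ≤ a) (hb : b ≤ 4) (h1 : a < z) (h2 : z < b)
    (hgap : ∀ k : ℤ, a < (k:ℝ)/8 → (k:ℝ)/8 < b → (8 < k → 2 ∣ k) → (16 < k → 4 ∣ k) → False) :
    False := by
  obtain ⟨k, hk, _, _, hd2, hd4⟩ := mem_cases q hq hz (by linarith) (by linarith)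
  exact hgap k (by rw [← hk]; exact h1) (by rw [← hk]; exact h2) hd2 hd4

lemma gap_2_52 (q : ℕ) (hq : (5:ℤ) ≤ 2 ^ (q - 1)) {z : ℝ} (hz : z ∈ Fset 2 q) :
    ¬ (2 < z ∧ z < 5/2) := by
  rintro ⟨h, h'⟩
  refine no_float_in q hq hz (by norm_num) (by norm_num) h h' (fun k hk1 hk2 _ hd4 => ?_)
  have hk16 : 16 < k := by
    have : (16:ℝ) < k := by linarith
    exact_mod_cast this
  have hk20 : k < 20 := by
    have : (k:ℝ) < 20 := by linarith
    exact_mod_cast this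
  have := hd4 hk16
  omega

lemma gap_3_72 (q : ℕ) (hq : (5:ℤ) ≤ 2 ^ (q - 1)) {z : ℝ} (hz : z ∈ Fset 2 q) :
    ¬ (3 < z ∧ z < 7/2) := by
  rintro ⟨h, h'⟩
  refine no_float_in q hq hz (by norm_num) (by norm_num) h h' (fun k hk1 hk2 _ hd4 => ?_)
  have hk24 : 24 < k := by
    have : (24:ℝ) < k := by linarith
    exact_mod_cast this
  have hk28 : k < 28 := by
    have : (k:ℝ) < 28 := by linarith
    exact_mod_cast this
  have := hd4 (by omega)
  omega

lemma gap_1_54 (q : ℕ) (hq : (5:ℤ) ≤ 2 ^ (q - 1)) {z : ℝ} (hz : z ∈ Fset 2 q) :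
    ¬ (1 < z ∧ z < 5/4) := by
  rintro ⟨h, h'⟩
  refine no_float_in q hq hz (by norm_num) (by norm_num) h h' (fun k hk1 hk2 hd2 _ => ?_)
  have hk8 : 8 < k := by
    have : (8:ℝ) < k := by linarith
    exact_mod_cast this
  have hk10 : k < 10 := by
    have : (k:ℝ) < 10 := by linarith
    exact_mod_cast this
  have := hd2 hk8
  omega

lemma rnd_9_4 (q : ℕ) (hq : (5:ℤ) ≤ 2 ^ (q - 1)) : rnd 2 q (9/4) = .fin 2 := by
  have ht := thr_big q hq
  have habs : |(9:ℝ)/4 - 2| = 1/4 := by rw [show (9:ℝ)/4 - 2 = 1/4 by norm_num]; norm_num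
  have hmin : ∀ z ∈ Fset 2 q, |(9:ℝ)/4 - 2| ≤ |9/4 - z| := by
    intro z hzF
    rw [habs]
    rcases le_or_gt z 2 with h | h
    · exact le_trans (by linarith) (le_abs_self _)
    · rcases le_or_gt (5/2 : ℝ) z with h' | h'
      · exact le_trans (by linarith) (neg_le_abs _)
      · exact absurd ⟨h, h'⟩ (gap_2_52 q hq hzF)
  refine rnd_tie 2 q (9/4) 2 (5/2) (by linarith) (by linarith)
    (mem_Fset_of q hq 4 1 (by norm_num) (by norm_num) (by norm_num) (by norm_num) (by norm_num))
    (by rw [show (9:ℝ)/4 - 5/2 = -(1/4) by norm_num, show (9:ℝ)/4 - 2 = 1/4 by norm_num,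
          abs_neg])
    hmin (fun z hz => ?_)
    (even_of q hq 4 1 (by norm_num) (by norm_num) (by norm_num) (by norm_num) ⟨2, rfl⟩
      (by norm_num)) (not_even_5_2 q hq)
  rw [habs] at hz
  rcases (abs_eq (by norm_num : (0:ℝ) ≤ 1/4)).mp hz with h | h
  · left; linarith
  · right; linarith

lemma rnd_13_4 (q : ℕ) (hq : (5:ℤ) ≤ 2 ^ (q - 1)) : rnd 2 q (13/4) = .fin 3 := by
  have ht := thr_big q hq
  have habs : |(13:ℝ)/4 - 3| = 1/4 := by rw [show (13:ℝ)/4 - 3 = 1/4 by norm_num]; norm_num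
  have hmin : ∀ z ∈ Fset 2 q, |(13:ℝ)/4 - 3| ≤ |13/4 - z| := by
    intro z hzF
    rw [habs]
    rcases le_or_gt z 3 with h | h
    · exact le_trans (by linarith) (le_abs_self _)
    · rcases le_or_gt (7/2 : ℝ) z with h' | h'
      · exact le_trans (by linarith) (neg_le_abs _)
      · exact absurd ⟨h, h'⟩ (gap_3_72 q hq hzF)
  refine rnd_tie 2 q (13/4) 3 (7/2) (by linarith) (by linarith)
    (mem_Fset_of q hq 6 1 (by norm_num) (by norm_num) (by norm_num) (by norm_num) (by norm_num))
    (by rw [show (13:ℝ)/4 - 7/2 = -(1/4) by norm_num, show (13:ℝ)/4 - 3 = 1/4 by norm_num,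
          abs_neg])
    hmin (fun z hz => ?_)
    (even_of q hq 6 1 (by norm_num) (by norm_num) (by norm_num) (by norm_num) ⟨3, rfl⟩
      (by norm_num)) (not_even_7_2 q hq)
  rw [habs] at hz
  rcases (abs_eq (by norm_num : (0:ℝ) ≤ 1/4)).mp hz with h | h
  · left; linarith
  · right; linarith

lemma rnd_9_8 (q : ℕ) (hq : (5:ℤ) ≤ 2 ^ (q - 1)) : rnd 2 q (9/8) = .fin 1 := by
  have ht := thr_big q hq
  have habs : |(9:ℝ)/8 - 1| = 1/8 := by rw [show (9:ℝ)/8 - 1 = 1/8 by norm_num]; norm_num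
  have hmin : ∀ z ∈ Fset 2 q, |(9:ℝ)/8 - 1| ≤ |9/8 - z| := by
    intro z hzF
    rw [habs]
    rcases le_or_gt z 1 with h | h
    · exact le_trans (by linarith) (le_abs_self _)
    · rcases le_or_gt (5/4 : ℝ) z with h' | h'
      · exact le_trans (by linarith) (neg_le_abs _)
      · exact absurd ⟨h, h'⟩ (gap_1_54 q hq hzF)
  refine rnd_tie 2 q (9/8) 1 (5/4) (by linarith) (by linarith)
    (mem_Fset_of q hq 4 0 (by norm_num) (by norm_num) (by norm_num) (by norm_num) (by norm_num))
    (by rw [show (9:ℝ)/8 - 5/4 = -(1/8) by norm_num, show (9:ℝ)/8 - 1 = 1/8 by norm_num,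
          abs_neg])
    hmin (fun z hz => ?_)
    (even_of q hq 4 0 (by norm_num) (by norm_num) (by norm_num) (by norm_num) ⟨2, rfl⟩
      (by norm_num)) (not_even_5_4 q hq)
  rw [habs] at hz
  rcases (abs_eq (by norm_num : (0:ℝ) ≤ 1/8)).mp hz with h | h
  · left; linarith
  · right; linarith

lemma rnd_35_32 (q : ℕ) (hq : (5:ℤ) ≤ 2 ^ (q - 1)) : rnd 2 q (35/32) = .fin 1 := by
  have ht := thr_big q hq
  have habs : |(35:ℝ)/32 - 1| = 3/32 := by
    rw [show (35:ℝ)/32 - 1 = 3/32 by norm_num]; norm_num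
  have hmin : ∀ z ∈ Fset 2 q, |(35:ℝ)/32 - 1| ≤ |35/32 - z| := by
    intro z hzF
    rw [habs]
    rcases le_or_gt z 1 with h | h
    · exact le_trans (by linarith) (le_abs_self _)
    · have h' : 5/4 ≤ z := by
        by_contra hcon
        push_neg at hcon
        exact gap_1_54 q hq hzF ⟨h, hcon⟩
      exact le_trans (by linarith) (neg_le_abs _)
  refine rnd_strict 2 q (35/32) 1 (by linarith) (by linarith)
    (mem_Fset_of q hq 4 0 (by norm_num) (by norm_num) (by norm_num) (by norm_num) (by norm_num))
    hmin (fun z hzF hz => ?_)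
  rw [habs] at hz
  rcases (abs_eq (by norm_num : (0:ℝ) ≤ 3/32)).mp hz with h | h
  · linarith
  · exfalso
    have hz19 : z = 19/16 := by linarith
    obtain ⟨k, hk, _, _, _, _⟩ := mem_cases q hq hzF (by rw [hz19]; norm_num)
      (by rw [hz19]; norm_num)
    rw [hz19] at hk
    have h2k : (2:ℝ) * k = 19 := by linarith
    have : (2:ℤ) * k = 19 := by exact_mod_cast h2k
    omega

lemma rnd_one (q : ℕ) (hq : (5:ℤ) ≤ 2 ^ (q - 1)) : rnd 2 q 1 = .fin 1 := by
  have ht := thr_big q hq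
  exact rnd_exact 2 q 1 (by linarith) (by linarith)
    (mem_Fset_of q hq 4 0 (by norm_num) (by norm_num) (by norm_num) (by norm_num) (by norm_num))

lemma rnd_5_2 (q : ℕ) (hq : (5:ℤ) ≤ 2 ^ (q - 1)) : rnd 2 q (5/2) = .fin (5/2) := by
  have ht := thr_big q hq
  exact rnd_exact 2 q (5/2) (by linarith) (by linarith)
    (mem_Fset_of q hq 5 1 (by norm_num) (by norm_num) (by norm_num) (by norm_num) (by norm_num))

lemma rnd_7_2 (q : ℕ) (hq : (5:ℤ) ≤ 2 ^ (q - 1)) : rnd 2 q (7/2) = .fin (7/2) := by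
  have ht := thr_big q hq
  exact rnd_exact 2 q (7/2) (by linarith) (by linarith)
    (mem_Fset_of q hq 7 1 (by norm_num) (by norm_num) (by norm_num) (by norm_num) (by norm_num))

end Main
section Thm

open FPT

lemma classify (q : ℕ) (hq : (5:ℤ) ≤ 2 ^ (q - 1)) {x : ℝ} (hxF : x ∈ Fset 2 q)
    (hx1 : 1 < x) (hx2 : x ≤ 2) : x = 5/4 ∨ x = 3/2 ∨ x = 7/4 ∨ x = 2 := by
  obtain ⟨k, hk, _, _, hd2, _⟩ := mem_cases q hq hxF (by linarith) (by linarith)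
  have hk8 : 8 < k := by
    have : (8:ℝ) < k := by rw [hk] at hx1; linarith
    exact_mod_cast this
  have hk16 : k ≤ 16 := by
    have : (k:ℝ) ≤ 16 := by rw [hk] at hx2; linarith
    exact_mod_cast this
  have hdd := hd2 hk8
  have : k = 10 ∨ k = 12 ∨ k = 14 ∨ k = 16 := by omega
  rcases this with h | h | h | h <;> rw [h] at hk <;> norm_num at hk <;> tauto
/-- Lemma `onep2`. For `p = 2`:
`(1⁺ ⊕ 1) ⊕ 1⁺ = (1 ⊕ 1⁺) ⊕ 1⁺ = 3` and `(1⁺ ⊕ 1⁺) ⊕ 1 = 3⁺`; moreover every float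
`x ∈ (1,2]` has a float `y ∈ [1/2, 1)` with `x ⊗ y = 1`. -/
theorem stmt15 (q : ℕ) (hpq : (2 : ℤ) ≤ 2 ^ (q - 1) - 3) :
    FPT.fadd 2 q (FPT.fadd 2 q (.fin (1 + 2 ^ (-(2 : ℤ)))) (.fin 1))
        (.fin (1 + 2 ^ (-(2 : ℤ)))) = .fin 3 ∧
    FPT.fadd 2 q (FPT.fadd 2 q (.fin 1) (.fin (1 + 2 ^ (-(2 : ℤ)))))
        (.fin (1 + 2 ^ (-(2 : ℤ)))) = .fin 3 ∧
    FPT.fadd 2 q (FPT.fadd 2 q (.fin (1 + 2 ^ (-(2 : ℤ)))) (.fin (1 + 2 ^ (-(2 : ℤ)))))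
        (.fin 1) = .fin (3 + 2 ^ (-(1 : ℤ))) ∧
    (∀ x : ℝ, x ∈ FPT.Fset 2 q → 1 < x → x ≤ 2 →
      ∃ y : ℝ, y ∈ FPT.Fset 2 q ∧ (1 / 2 : ℝ) ≤ y ∧ y < 1 ∧
        FPT.fmul 2 q (.fin x) (.fin y) = .fin 1) := by
  have hq : (5:ℤ) ≤ 2 ^ (q - 1) := by linarith
  have he14 : (1:ℝ) + 2 ^ (-(2 : ℤ)) = 5/4 := by norm_num
  have he32 : (3:ℝ) + 2 ^ (-(1 : ℤ)) = 7/2 := by norm_num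
  refine ⟨?_, ?_, ?_, ?_⟩
  · rw [he14]
    have h1 : FPT.fadd 2 q (.fin (5/4)) (.fin 1) = FPT.rnd 2 q (5/4 + 1) := rfl
    rw [h1, show (5:ℝ)/4 + 1 = 9/4 by norm_num, rnd_9_4 q hq]
    have h2 : FPT.fadd 2 q (.fin 2) (.fin (5/4)) = FPT.rnd 2 q (2 + 5/4) := rfl
    rw [h2, show (2:ℝ) + 5/4 = 13/4 by norm_num, rnd_13_4 q hq]
  · rw [he14]
    have h1 : FPT.fadd 2 q (.fin 1) (.fin (5/4)) = FPT.rnd 2 q (1 + 5/4) := rfl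
    rw [h1, show (1:ℝ) + 5/4 = 9/4 by norm_num, rnd_9_4 q hq]
    have h2 : FPT.fadd 2 q (.fin 2) (.fin (5/4)) = FPT.rnd 2 q (2 + 5/4) := rfl
    rw [h2, show (2:ℝ) + 5/4 = 13/4 by norm_num, rnd_13_4 q hq]
  · rw [he14, he32]
    have h1 : FPT.fadd 2 q (.fin (5/4)) (.fin (5/4)) = FPT.rnd 2 q (5/4 + 5/4) := rfl
    rw [h1, show (5:ℝ)/4 + 5/4 = 5/2 by norm_num, rnd_5_2 q hq]
    have h2 : FPT.fadd 2 q (.fin (5/2)) (.fin 1) = FPT.rnd 2 q (5/2 + 1) := rfl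
    rw [h2, show (5:ℝ)/2 + 1 = 7/2 by norm_num, rnd_7_2 q hq]
  · intro x hxF hx1 hx2
    have hmul : ∀ y : ℝ, FPT.fmul 2 q (.fin x) (.fin y) = FPT.rnd 2 q (x * y) := fun y => rfl
    rcases classify q hq hxF hx1 hx2 with h | h | h | h
    · refine ⟨7/8, mem_Fset_of q hq 7 (-1) (by norm_num) (by norm_num) (by norm_num)
        (by norm_num) (by norm_num), by norm_num, by norm_num, ?_⟩
      rw [hmul, h, show (5:ℝ)/4 * (7/8) = 35/32 by norm_num, rnd_35_32 q hq]
    · refine ⟨3/4, mem_Fset_of q hq 6 (-1) (by norm_num) (by norm_num) (by norm_num)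
        (by norm_num) (by norm_num), by norm_num, by norm_num, ?_⟩
      rw [hmul, h, show (3:ℝ)/2 * (3/4) = 9/8 by norm_num, rnd_9_8 q hq]
    · refine ⟨5/8, mem_Fset_of q hq 5 (-1) (by norm_num) (by norm_num) (by norm_num)
        (by norm_num) (by norm_num), by norm_num, by norm_num, ?_⟩
      rw [hmul, h, show (7:ℝ)/4 * (5/8) = 35/32 by norm_num, rnd_35_32 q hq]
    · refine ⟨1/2, mem_Fset_of q hq 4 (-1) (by norm_num) (by norm_num) (by norm_num)
        (by norm_num) (by norm_num), by norm_num, by norm_num, ?_⟩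
      rw [hmul, h, show (2:ℝ) * (1/2) = 1 by norm_num, rnd_one q hq]
end Thm
end

section
/- For any d_0 ∈ ℕ there exist d_1, d_2 ∈ ℕ and floating-point affine transformations φ_1 : 𝔽̄^{d_0} → 𝔽̄^{d_1} and φ_2 : 𝔽̄^{d_1} → 𝔽̄^{d_2} such that the map f : 𝔽^{d_0} → 𝔽^{d_2} defined by f(x) = ρ(φ_2(ρ(φ_1(x)))) is injective on 𝔽^{d_0}, satisfies f(𝔽^{d_0}) ⊆ ([0, 2^{e_max}] ∩ 𝔽)^{d_2}, and all values appearing in the intermediate computation (every coordinate of φ_1(x), ρ(φ_1(x)), φ_2(ρ(φ_1(x))), including every left-associative partial sum in the floating-point matrix–vector products) are finite for every x ∈ 𝔽^{d_0}. -/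
open scoped Classical

/-!
Each input coordinate `x` gets four neurons in each layer. The first layer computes
`(x, -x, ⌊x/2⌉, ⌊-x/2⌉)`, whose ReLU is `(x⁺, x⁻, A, B)`; the second outputs
`(A, B, x⁺ - A, x⁻ - B)`, from which `x = A - B + (x⁺ - A) - (x⁻ - B)`. Halving is what brings
floats up to `Ω ≈ 2^(emax+1)` below `2^emax`. It rounds only when `x` is an odd multiple of the
subnormal spacing, and then by half a spacing, so `x⁺ - A` is again a float. All other weights
are `0` or `±1` and every row has at most two nonzero terms, all of whose partial sums are
floats, so no other operation rounds or overflows.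
-/

namespace FPT

noncomputable section

variable {p q : ℕ}

lemma emin_eq_one_sub_emax : emin q = 1 - emax q := by
  unfold emin emax; ring

lemma two_zpow_mem_Fset {e : ℤ} (h₁ : emin q ≤ e) (h₂ : e ≤ emax q) :
    (2 : ℝ) ^ e ∈ Fset p q := by
  have hpos : (0 : ℤ) < 2 ^ p := by positivity
  have hpow : (2 : ℤ) ^ (p + 1) = 2 * 2 ^ p := by ring
  refine ⟨2 ^ p, e, ?_, h₁, h₂, Or.inl (abs_of_pos hpos).ge, ?_⟩
  · rw [abs_of_pos hpos]; omega
  · rw [Int.cast_pow, Int.cast_ofNat, ← zpow_natCast, ← zpow_add₀ two_ne_zero]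
    ring_nf

lemma zero_mem_Fset (he : 1 ≤ emax q) : (0 : ℝ) ∈ Fset p q := by
  have hpos : (0 : ℤ) < 2 ^ (p + 1) := by positivity
  refine ⟨0, emin q, by rw [abs_zero]; omega, le_rfl, ?_, Or.inr rfl, by simp⟩
  rw [emin_eq_one_sub_emax]; omega

lemma one_mem_Fset (he : 1 ≤ emax q) : (1 : ℝ) ∈ Fset p q := by
  simpa using two_zpow_mem_Fset (p := p) (e := 0) (by rw [emin_eq_one_sub_emax]; omega) (by omega)

lemma inv_two_mem_Fset (he : 2 ≤ emax q) : (2⁻¹ : ℝ) ∈ Fset p q := by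
  simpa using two_zpow_mem_Fset (p := p) (e := -1) (by rw [emin_eq_one_sub_emax]; omega)
    (by omega)

lemma neg_mem_Fset {x : ℝ} (hx : x ∈ Fset p q) : -x ∈ Fset p q := by
  obtain ⟨m, e, hm, he₁, he₂, hnorm, rfl⟩ := hx
  exact ⟨-m, e, by rwa [abs_neg], he₁, he₂, by rwa [abs_neg], by push_cast; ring⟩

lemma neg_mem_Fset_iff {x : ℝ} : -x ∈ Fset p q ↔ x ∈ Fset p q :=
  ⟨fun h => by simpa using neg_mem_Fset h, neg_mem_Fset⟩

lemma max_zero_mem_Fset (he : 1 ≤ emax q) {x : ℝ} (hx : x ∈ Fset p q) :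
    max x 0 ∈ Fset p q := by
  rcases le_total x 0 with h | h
  · rw [max_eq_right h]; exact zero_mem_Fset he
  · rwa [max_eq_left h]

/-- The spacing of the subnormal floats. -/
def ulpMin (p q : ℕ) : ℝ := 2 ^ (emin q - p)

lemma ulpMin_pos : 0 < ulpMin p q := zpow_pos two_pos _

lemma two_pow_mul_ulpMin : (2 : ℝ) ^ p * ulpMin p q = 2 ^ emin q := by
  rw [ulpMin, ← zpow_natCast, ← zpow_add₀ two_ne_zero]; ring_nf

lemma exists_eq_int_mul_ulpMin {x : ℝ} (hx : x ∈ Fset p q) :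
    ∃ M : ℤ, x = M * ulpMin p q := by
  obtain ⟨m, e, -, he₁, -, -, rfl⟩ := hx
  refine ⟨m * 2 ^ (e - emin q).toNat, ?_⟩
  rw [ulpMin, Int.cast_mul, Int.cast_pow, Int.cast_ofNat, ← zpow_natCast,
    Int.toNat_of_nonneg (by omega), mul_assoc, ← zpow_add₀ two_ne_zero]
  ring_nf

lemma int_mul_ulpMin_mem_Fset (he : 1 ≤ emax q) {k : ℤ} (hk : |k| ≤ 2 ^ (p + 1) - 1) :
    (k : ℝ) * ulpMin p q ∈ Fset p q :=
  ⟨k, emin q, hk, le_rfl, by rw [emin_eq_one_sub_emax]; omega, Or.inr rfl, rfl⟩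

lemma int_mul_ulpMin_le (he : 1 ≤ emax q) {k : ℤ} (hk : k ≤ 2 ^ p) :
    (k : ℝ) * ulpMin p q ≤ 2 ^ emax q := calc
  (k : ℝ) * ulpMin p q ≤ 2 ^ p * ulpMin p q :=
    mul_le_mul_of_nonneg_right (by exact_mod_cast hk) ulpMin_pos.le
  _ = 2 ^ emin q := two_pow_mul_ulpMin
  _ ≤ 2 ^ emax q := zpow_le_zpow_right₀ one_le_two (by rw [emin_eq_one_sub_emax]; omega)

lemma half_mem_or_eq_int_mul_ulpMin {x : ℝ} (hx : x ∈ Fset p q) :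
    2⁻¹ * x ∈ Fset p q ∨ ∃ m : ℤ, |m| ≤ 2 ^ (p + 1) - 1 ∧ x = m * ulpMin p q := by
  obtain ⟨m, e, hm, he₁, he₂, hnorm, rfl⟩ := hx
  by_cases he : e = emin q
  · exact Or.inr ⟨m, hm, by rw [he, ulpMin]⟩
  · refine Or.inl ⟨m, e - 1, hm, by omega, by omega, Or.inl (hnorm.resolve_right he), ?_⟩
    rw [show e - 1 - (p : ℤ) = (e - p) + (-1) by ring, zpow_add₀ two_ne_zero]
    simp only [zpow_neg, zpow_one]; ring

lemma Omega_eq : Omega p q = ((2 ^ (p + 1) - 1 : ℤ) : ℝ) * 2 ^ (emax q - p) := by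
  rw [Omega, zpow_sub₀ two_ne_zero, zpow_neg, zpow_natCast]
  push_cast
  field_simp
  ring

lemma abs_le_Omega {x : ℝ} (hx : x ∈ Fset p q) : |x| ≤ Omega p q := by
  obtain ⟨m, e, hm, -, he₂, -, rfl⟩ := hx
  rw [Omega_eq, abs_mul, abs_of_pos (zpow_pos (two_pos (α := ℝ)) (e - p)), ← Int.cast_abs]
  have hpos : (0 : ℤ) < 2 ^ (p + 1) := by positivity
  gcongr
  · exact_mod_cast (by omega : (0 : ℤ) ≤ 2 ^ (p + 1) - 1)
  · exact one_le_two

lemma Omega_le : Omega p q ≤ 2 * 2 ^ emax q := by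
  have := zpow_pos (two_pos (α := ℝ)) (-(p : ℤ))
  have := zpow_pos (two_pos (α := ℝ)) (emax q)
  rw [Omega]; nlinarith

lemma Omega_lt_thr : Omega p q < thr p q :=
  lt_add_of_pos_right _ (zpow_pos two_pos _)

/-- The value of `rnd` on the finite range. It is a nearest float only where some `RoundsTo`
witness exists, so such witnesses are constructed explicitly. -/
def nearest (p q : ℕ) (x : ℝ) : ℝ := Classical.epsilon (RoundsTo p q x)

lemma rnd_eq_fin_nearest {x : ℝ} (hx : |x| ≤ Omega p q) : rnd p q x = .fin (nearest p q x) := by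
  have := Omega_lt_thr (p := p) (q := q)
  rw [abs_le] at hx
  rw [rnd, if_neg (by linarith), if_neg (by linarith), nearest]

lemma nearest_roundsTo {x : ℝ} (h : ∃ y, RoundsTo p q x y) : RoundsTo p q x (nearest p q x) :=
  Classical.epsilon_spec h

lemma RoundsTo.self {x : ℝ} (hx : x ∈ Fset p q) : RoundsTo p q x x := by
  refine ⟨hx, fun z _ => by simp, Or.inl fun z _ h => ?_⟩
  rw [sub_self, abs_zero, abs_eq_zero, sub_eq_zero] at h
  exact h.symm

lemma nearest_eq_self {x : ℝ} (hx : x ∈ Fset p q) : nearest p q x = x := by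
  have h := (nearest_roundsTo ⟨x, .self hx⟩).2.1 x hx
  rw [sub_self, abs_zero, abs_nonpos_iff, sub_eq_zero] at h
  exact h.symm

lemma rnd_of_mem {x : ℝ} (hx : x ∈ Fset p q) : rnd p q x = .fin x := by
  rw [rnd_eq_fin_nearest (abs_le_Omega hx), nearest_eq_self hx]

lemma RoundsTo.nonpos {x y : ℝ} (h : RoundsTo p q x y) (h0 : (0 : ℝ) ∈ Fset p q) (hx : x ≤ 0) :
    y ≤ 0 := by
  by_contra hy
  have := h.2.1 0 h0
  rw [sub_zero, abs_of_nonpos hx, abs_of_neg (by linarith)] at this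
  linarith

lemma abs_half_int_mul_ulpMin_sub (m N : ℤ) :
    |2⁻¹ * (m * ulpMin p q) - N * ulpMin p q| = ((|m - 2 * N| : ℤ) : ℝ) * (ulpMin p q / 2) := by
  rw [show 2⁻¹ * (m * ulpMin p q) - N * ulpMin p q = ((m - 2 * N : ℤ) : ℝ) * (ulpMin p q / 2) by
    push_cast; ring, abs_mul, abs_of_pos (half_pos ulpMin_pos), Int.cast_abs]

/-- On the subnormal grid a tie is broken towards the even one of the two neighbours
`c·ulpMin` and `(c+1)·ulpMin` of `(c + 1/2)·ulpMin`. -/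
lemma exists_roundsTo_half_int_mul (he : 1 ≤ emax q) {m : ℤ} (hm : |m| ≤ 2 ^ (p + 1) - 1) :
    ∃ y, RoundsTo p q (2⁻¹ * (m * ulpMin p q)) y := by
  have hpow : (2 : ℤ) ^ (p + 1) = 2 * 2 ^ p := by ring
  rw [abs_le] at hm
  obtain ⟨c, rfl | rfl⟩ := Int.even_or_odd' m
  · refine ⟨_, .self ?_⟩
    rw [show 2⁻¹ * (((2 * c : ℤ) : ℝ) * ulpMin p q) = c * ulpMin p q by push_cast; ring]
    exact int_mul_ulpMin_mem_Fset he (abs_le.mpr ⟨by omega, by omega⟩)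
  · set k : ℤ := 2 * ((c + 1) / 2)
    have hk : |2 * c + 1 - 2 * k| = 1 := by rw [abs_eq zero_le_one]; omega
    have hkF : |k| ≤ 2 ^ (p + 1) - 1 := abs_le.mpr ⟨by omega, by omega⟩
    refine ⟨k * ulpMin p q, int_mul_ulpMin_mem_Fset he hkF, fun z hz => ?_,
      Or.inr ⟨k, emin q, hkF, le_rfl, by rw [emin_eq_one_sub_emax]; omega, Or.inr rfl, rfl,
        ⟨(c + 1) / 2, rfl⟩⟩⟩
    obtain ⟨N, rfl⟩ := exists_eq_int_mul_ulpMin hz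
    have hN : 1 ≤ |2 * c + 1 - 2 * N| := by rw [le_abs]; omega
    rw [abs_half_int_mul_ulpMin_sub, abs_half_int_mul_ulpMin_sub, hk]
    gcongr
    exact (half_pos ulpMin_pos).le

lemma RoundsTo.half_int_mul (he : 1 ≤ emax q) {m : ℤ} (hm : |m| ≤ 2 ^ (p + 1) - 1) {a : ℝ}
    (h : RoundsTo p q (2⁻¹ * (m * ulpMin p q)) a) :
    ∃ M : ℤ, a = M * ulpMin p q ∧ |m - 2 * M| ≤ 1 := by
  obtain ⟨M, rfl⟩ := exists_eq_int_mul_ulpMin h.1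
  refine ⟨M, rfl, ?_⟩
  rw [abs_le] at hm
  -- compare with the grid point `⌊m/2⌋ · ulpMin`, within half a spacing of the argument
  have hclose := h.2.1 _ (int_mul_ulpMin_mem_Fset he (k := m / 2) (abs_le.mpr ⟨by omega, by omega⟩))
  rw [abs_half_int_mul_ulpMin_sub, abs_half_int_mul_ulpMin_sub] at hclose
  have hle : |m - 2 * M| ≤ |m - 2 * (m / 2)| := by
    exact_mod_cast le_of_mul_le_mul_right hclose (half_pos ulpMin_pos)
  exact hle.trans (abs_le.mpr ⟨by omega, by omega⟩)

lemma exists_roundsTo_half (he : 1 ≤ emax q) {x : ℝ} (hx : x ∈ Fset p q) :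
    ∃ y, RoundsTo p q (2⁻¹ * x) y := by
  rcases half_mem_or_eq_int_mul_ulpMin hx with h | ⟨m, hm, rfl⟩
  · exact ⟨_, .self h⟩
  · exact exists_roundsTo_half_int_mul he hm

lemma nearest_half_of_nonneg (he : 1 ≤ emax q) {x : ℝ} (hx : x ∈ Fset p q) (h0 : 0 ≤ x) :
    0 ≤ nearest p q (2⁻¹ * x) ∧ nearest p q (2⁻¹ * x) ≤ 2 ^ emax q ∧
      x - nearest p q (2⁻¹ * x) ∈ Fset p q ∧ 0 ≤ x - nearest p q (2⁻¹ * x) ∧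
      x - nearest p q (2⁻¹ * x) ≤ 2 ^ emax q := by
  rcases half_mem_or_eq_int_mul_ulpMin hx with hhalf | ⟨m, hm, rfl⟩
  · have hle : 2⁻¹ * x ≤ 2 ^ emax q := by
      have := abs_le_Omega hx
      have := Omega_le (p := p) (q := q)
      rw [abs_of_nonneg h0] at *
      linarith
    rw [nearest_eq_self hhalf, show x - 2⁻¹ * x = 2⁻¹ * x by ring]
    exact ⟨by positivity, hle, hhalf, by positivity, hle⟩
  · obtain ⟨M, hM, hclose⟩ :=
      (nearest_roundsTo (exists_roundsTo_half_int_mul he hm)).half_int_mul he hm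
    have hm0 : 0 ≤ m := by exact_mod_cast nonneg_of_mul_nonneg_left h0 ulpMin_pos
    have hpow : (2 : ℤ) ^ (p + 1) = 2 * 2 ^ p := by ring
    rw [hM, ← sub_mul, ← Int.cast_sub]
    rw [abs_le] at hm hclose
    refine ⟨mul_nonneg (by exact_mod_cast (by omega : 0 ≤ M)) ulpMin_pos.le,
      int_mul_ulpMin_le he (by omega),
      int_mul_ulpMin_mem_Fset he (abs_le.mpr ⟨by omega, by omega⟩),
      mul_nonneg (by exact_mod_cast (by omega : 0 ≤ m - M)) ulpMin_pos.le,
      int_mul_ulpMin_le he (by omega)⟩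

/-- Stated for all subsets rather than prefixes, so that it does not depend on the summation
order and survives reindexing. -/
def SubsetSumsMem (p q : ℕ) {ι : Type*} (t : ι → ℝ) : Prop :=
  ∀ S : Finset ι, ∑ k ∈ S, t k ∈ Fset p q

section SubsetSums

variable {ι κ : Type*}

lemma SubsetSumsMem.mem {t : ι → ℝ} (h : SubsetSumsMem p q t) (k : ι) : t k ∈ Fset p q := by
  simpa using h {k}

lemma SubsetSumsMem.list_sum_mem [DecidableEq ι] {t : ι → ℝ} (h : SubsetSumsMem p q t)
    {L : List ι} (hL : L.Nodup) : (L.map t).sum ∈ Fset p q := by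
  rw [← List.sum_toFinset t hL]
  exact h _

lemma SubsetSumsMem.comp_embedding {t : ι → ℝ} (h : SubsetSumsMem p q t) (e : κ ↪ ι) :
    SubsetSumsMem p q (t ∘ e) := fun S => by
  rw [Function.comp_def, ← Finset.sum_map]
  exact h _

lemma SubsetSumsMem.ite_fst [DecidableEq κ] {f : ι → ℝ} (h : SubsetSumsMem p q f) (j : κ) :
    SubsetSumsMem p q (fun k : κ × ι => if j = k.1 then f k.2 else 0) := fun S => by
  rw [← Finset.sum_filter, ← Finset.sum_image (g := Prod.snd)]
  · exact h _
  · intro x hx y hy hxy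
    simp only [Finset.coe_filter, Set.mem_ofPred_eq] at hx hy
    exact Prod.ext (hx.2.symm.trans hy.2) hxy

lemma subsetSumsMem_ite_eq [DecidableEq ι] (he : 1 ≤ emax q) (j : ι) {τ : ℝ}
    (hτ : τ ∈ Fset p q) : SubsetSumsMem p q (fun k => if j = k then τ else 0) := fun S => by
  rw [Finset.sum_ite_eq]
  split_ifs
  exacts [hτ, zero_mem_Fset he]

lemma subsetSumsMem_of_support_pair [Fintype ι] [DecidableEq ι] (he : 1 ≤ emax q) {t : ι → ℝ}
    {k₁ k₂ : ι} (hne : k₁ ≠ k₂) (hsupp : ∀ k, k ≠ k₁ → k ≠ k₂ → t k = 0) (h₁ : t k₁ ∈ Fset p q)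
    (h₂ : t k₂ ∈ Fset p q) (hsum : ∑ k, t k ∈ Fset p q) : SubsetSumsMem p q t := fun S => by
  have ht : t = fun k => (if k₁ = k then t k₁ else 0) + (if k₂ = k then t k₂ else 0) := by
    funext k
    rcases eq_or_ne k₁ k with rfl | hk₁
    · simp [hne.symm]
    rcases eq_or_ne k₂ k with rfl | hk₂
    · simp [hk₁]
    simp [hk₁, hk₂, hsupp k hk₁.symm hk₂.symm]
  rw [Fintype.sum_eq_add k₁ k₂ hne fun k hk => hsupp k hk.1 hk.2] at hsum
  rw [ht, Finset.sum_add_distrib, Finset.sum_ite_eq, Finset.sum_ite_eq]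
  split_ifs
  · exact hsum
  · simpa using h₁
  · simpa using h₂
  · simpa using zero_mem_Fset he

lemma sum_ite_fst [Fintype ι] [Fintype κ] [DecidableEq κ] (f : ι → ℝ) (j : κ) :
    ∑ k : κ × ι, (if j = k.1 then f k.2 else 0) = ∑ s, f s := by
  simp [Fintype.sum_prod_type]

end SubsetSums

lemma foldl_fadd_fin (l : List ℝ) (s : ℝ) (h : ∀ m, s + (l.take m).sum ∈ Fset p q) :
    (l.map .fin).foldl (fadd p q) (.fin s) = .fin (s + l.sum) := by
  induction l generalizing s with
  | nil => simp
  | cons r l ih =>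
    have hsr : fadd p q (.fin s) (.fin r) = .fin (s + r) := rnd_of_mem (by simpa using h 1)
    rw [List.map_cons, List.foldl_cons, hsr,
      ih (s + r) fun m => by simpa [add_assoc] using h (m + 1), List.sum_cons, add_assoc]

lemma fsuml_map_fin {ι : Type*} [DecidableEq ι] {t : ι → ℝ} (h : SubsetSumsMem p q t)
    {L : List ι} (hL : L.Nodup) : fsuml p q (L.map fun k => .fin (t k)) = .fin (L.map t).sum := by
  cases L with
  | nil => rfl
  | cons k L =>
    have hpre : ∀ m, t k + ((L.map t).take m).sum ∈ Fset p q := fun m => by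
      simpa [List.map_take] using h.list_sum_mem (hL.sublist (List.take_sublist (m + 1) _))
    have hmap : L.map (fun k => EF.fin (t k)) = (L.map t).map .fin := by simp
    rw [List.map_cons, fsuml, hmap, foldl_fadd_fin _ _ hpre, List.map_cons, List.sum_cons]

/-- Row `i` of `W ⊗ v ⊕ c` has value `r`, and none of its additions rounds. -/
def ExactRow (p q : ℕ) {a b : ℕ} (W : Fin b → Fin a → ℝ) (c : ℝ) (v : Fin a → EF) (i : Fin b)
    (r : ℝ) : Prop :=
  ∃ t : Fin a → ℝ, (∀ k, fmul p q (.fin (W i k)) (v k) = .fin (t k)) ∧ SubsetSumsMem p q t ∧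
    ∑ k, t k + c = r ∧ r ∈ Fset p q

section ExactRow

variable {a b : ℕ} {W : Fin b → Fin a → ℝ} {c : ℝ} {v : Fin a → EF} {i : Fin b} {r : ℝ}

lemma ExactRow.affApply_eq (h : ExactRow p q W c v i r) : affApply p q W c v i = .fin r := by
  obtain ⟨t, ht, hS, rfl, hr⟩ := h
  simp only [affApply, fsum, ht]
  rw [fsuml_map_fin hS (List.nodup_finRange a), ← Fin.sum_univ_def]
  exact rnd_of_mem hr

lemma ExactRow.fsuml_take_finite (h : ExactRow p q W c v i r) (m : ℕ) :
    (fsuml p q (((List.finRange a).take m).map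
      fun k => fmul p q (.fin (W i k)) (v k))).Finite := by
  obtain ⟨t, ht, hS, -, -⟩ := h
  simp only [ht]
  rw [fsuml_map_fin hS ((List.nodup_finRange a).sublist (List.take_sublist _ _))]
  trivial

end ExactRow

lemma affIntermFin_of_exactRow {a b : ℕ} {W : Fin b → Fin a → ℝ} {c : ℝ} {v : Fin a → EF}
    (h : ∀ i, ∃ r, ExactRow p q W c v i r) : AffIntermFin p q W c v := fun i => by
  obtain ⟨r, hr⟩ := h i
  exact ⟨hr.fsuml_take_finite, by rw [hr.affApply_eq]; trivial⟩

lemma relu_nearest_half_bounds (he : 1 ≤ emax q) {x : ℝ} (hx : x ∈ Fset p q) :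
    max (nearest p q (2⁻¹ * x)) 0 ≤ 2 ^ emax q ∧
      max x 0 - max (nearest p q (2⁻¹ * x)) 0 ∈ Fset p q ∧
      0 ≤ max x 0 - max (nearest p q (2⁻¹ * x)) 0 ∧
      max x 0 - max (nearest p q (2⁻¹ * x)) 0 ≤ 2 ^ emax q := by
  have hpow : (0 : ℝ) ≤ 2 ^ emax q := zpow_nonneg zero_le_two _
  rcases le_total x 0 with h | h
  · have ha := (nearest_roundsTo (exists_roundsTo_half he hx)).nonpos (zero_mem_Fset he)
      (by linarith)
    rw [max_eq_right h, max_eq_right ha, sub_zero]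
    exact ⟨hpow, zero_mem_Fset he, le_rfl, hpow⟩
  · obtain ⟨h0, hle, hmem, hsub0, hsub⟩ := nearest_half_of_nonneg he hx h
    rw [max_eq_left h, max_eq_left h0]
    exact ⟨hle, hmem, hsub0, hsub⟩

def gadgetIn : Fin 4 → ℝ := ![1, -1, 2⁻¹, -2⁻¹]

def gadgetOut : Matrix (Fin 4) (Fin 4) ℝ :=
  !![0, 0, 1, 0;
    0, 0, 0, 1;
    1, 0, -1, 0;
    0, 1, 0, -1]

def gadgetHidden (p q : ℕ) (x : ℝ) (s : Fin 4) : ℝ := max (nearest p q (gadgetIn s * x)) 0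

def gadgetCode (p q : ℕ) (x : ℝ) (r : Fin 4) : ℝ := ∑ s, gadgetOut r s * gadgetHidden p q x s

section Gadget

variable {x : ℝ}

lemma abs_gadgetIn_le_one (s : Fin 4) : |gadgetIn s| ≤ 1 := by
  fin_cases s <;> norm_num [gadgetIn, abs_of_pos]

lemma gadgetIn_mem (he : 2 ≤ emax q) (s : Fin 4) : gadgetIn s ∈ Fset p q := by
  have h1 := one_mem_Fset (p := p) (by omega : 1 ≤ emax q)
  have h2 := inv_two_mem_Fset (p := p) he
  fin_cases s
  exacts [h1, neg_mem_Fset h1, h2, neg_mem_Fset h2]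

lemma gadgetOut_mem (he : 1 ≤ emax q) (r s : Fin 4) : gadgetOut r s ∈ Fset p q := by
  have h0 := zero_mem_Fset (p := p) he
  have h1 := one_mem_Fset (p := p) he
  fin_cases r <;> fin_cases s <;> simp [gadgetOut, h0, h1, neg_mem_Fset h1]

lemma exists_roundsTo_gadgetIn_mul (he : 1 ≤ emax q) (hx : x ∈ Fset p q) (s : Fin 4) :
    ∃ y, RoundsTo p q (gadgetIn s * x) y := by
  fin_cases s
  · exact ⟨_, .self (by simpa [gadgetIn] using hx)⟩
  · exact ⟨_, .self (by simpa [gadgetIn] using neg_mem_Fset hx)⟩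
  · simpa [gadgetIn] using exists_roundsTo_half he hx
  · simpa [gadgetIn] using exists_roundsTo_half he (neg_mem_Fset hx)

lemma gadgetHidden_mem (he : 1 ≤ emax q) (hx : x ∈ Fset p q) (s : Fin 4) :
    gadgetHidden p q x s ∈ Fset p q :=
  max_zero_mem_Fset he (nearest_roundsTo (exists_roundsTo_gadgetIn_mul he hx s)).1

lemma gadgetHidden_eq (hx : x ∈ Fset p q) :
    gadgetHidden p q x = ![max x 0, max (-x) 0, max (nearest p q (2⁻¹ * x)) 0,
      max (nearest p q (-(2⁻¹ * x))) 0] := by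
  funext s
  fin_cases s <;>
    simp [gadgetHidden, gadgetIn, nearest_eq_self hx, nearest_eq_self (neg_mem_Fset hx)]

lemma gadgetCode_eq :
    gadgetCode p q x = ![gadgetHidden p q x 2, gadgetHidden p q x 3,
      gadgetHidden p q x 0 - gadgetHidden p q x 2,
      gadgetHidden p q x 1 - gadgetHidden p q x 3] := by
  funext r
  fin_cases r <;> simp [gadgetCode, gadgetOut, Fin.sum_univ_four] <;> ring

lemma gadgetCode_bounds (he : 1 ≤ emax q) (hx : x ∈ Fset p q) (r : Fin 4) :
    gadgetCode p q x r ∈ Fset p q ∧ 0 ≤ gadgetCode p q x r ∧ gadgetCode p q x r ≤ 2 ^ emax q := by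
  obtain ⟨hA, hAsub, hAsub0, hAsub'⟩ := relu_nearest_half_bounds he hx
  obtain ⟨hB, hBsub, hBsub0, hBsub'⟩ := relu_nearest_half_bounds he (neg_mem_Fset hx)
  have hmem := gadgetHidden_mem he hx
  rw [gadgetHidden_eq hx] at hmem
  rw [gadgetCode_eq, gadgetHidden_eq hx]
  simp only [mul_neg] at hB hBsub hBsub0 hBsub'
  fin_cases r
  · exact ⟨hmem 2, le_max_right _ _, hA⟩
  · exact ⟨hmem 3, le_max_right _ _, hB⟩
  · exact ⟨hAsub, hAsub0, hAsub'⟩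
  · exact ⟨hBsub, hBsub0, hBsub'⟩

lemma gadgetCode_injOn (hx : x ∈ Fset p q) {y : ℝ} (hy : y ∈ Fset p q)
    (h : gadgetCode p q x = gadgetCode p q y) : x = y := by
  have decode : ∀ {z : ℝ}, z ∈ Fset p q →
      gadgetCode p q z 0 - gadgetCode p q z 1 + gadgetCode p q z 2 - gadgetCode p q z 3 = z :=
    fun hz => by simp [gadgetCode_eq, gadgetHidden_eq hz]
  rw [← decode hx, ← decode hy, h]

lemma subsetSumsMem_gadgetOut_mul (he : 1 ≤ emax q) (hx : x ∈ Fset p q) (r : Fin 4) :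
    SubsetSumsMem p q (fun s => gadgetOut r s * gadgetHidden p q x s) := by
  have hterm : ∀ s, gadgetOut r s * gadgetHidden p q x s ∈ Fset p q := fun s => by
    have hmem := gadgetHidden_mem he hx
    fin_cases r <;> fin_cases s <;> simp [gadgetOut, hmem, neg_mem_Fset_iff, zero_mem_Fset he]
  have pair : ∀ k₁ k₂ : Fin 4, k₁ ≠ k₂ → (∀ s, s ≠ k₁ → s ≠ k₂ → gadgetOut r s = 0) →
      SubsetSumsMem p q (fun s => gadgetOut r s * gadgetHidden p q x s) :=
    fun k₁ k₂ hne hsupp => subsetSumsMem_of_support_pair he hne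
      (fun s h₁ h₂ => by rw [hsupp s h₁ h₂, zero_mul]) (hterm k₁) (hterm k₂)
      (gadgetCode_bounds he hx r).1
  fin_cases r
  · exact pair 0 2 (by decide) fun s => by fin_cases s <;> simp [gadgetOut]
  · exact pair 1 3 (by decide) fun s => by fin_cases s <;> simp [gadgetOut]
  · exact pair 0 2 (by decide) fun s => by fin_cases s <;> simp [gadgetOut]
  · exact pair 1 3 (by decide) fun s => by fin_cases s <;> simp [gadgetOut]

end Gadget

lemma VecFin.exists_eq_fin {a : ℕ} {x : Fin a → EF} (hx : VecFin p q x) :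
    ∃ xr : Fin a → ℝ, (∀ k, xr k ∈ Fset p q) ∧ x = fun k => .fin (xr k) := by
  have : ∀ k, ∃ r, r ∈ Fset p q ∧ x k = .fin r := fun k => by
    have hk := hx k
    cases h : x k <;> rw [h] at hk
    · exact ⟨_, hk, rfl⟩
    all_goals exact hk.elim
  choose xr hxr hx' using this
  exact ⟨xr, hxr, funext hx'⟩

lemma frelu_fin_of_mem {x : ℝ} (h : max x 0 ∈ Fset p q) : frelu p q (.fin x) = .fin (max x 0) :=
  rnd_of_mem h

def layerOne (d0 : ℕ) : Fin (d0 * 4) → Fin d0 → ℝ := fun i k =>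
  if (finProdFinEquiv.symm i).1 = k then gadgetIn (finProdFinEquiv.symm i).2 else 0

def layerTwo (d0 : ℕ) : Fin (d0 * 4) → Fin (d0 * 4) → ℝ := fun i k =>
  if (finProdFinEquiv.symm i).1 = (finProdFinEquiv.symm k).1 then
    gadgetOut (finProdFinEquiv.symm i).2 (finProdFinEquiv.symm k).2
  else 0

def networkHidden (p q : ℕ) {d0 : ℕ} (xr : Fin d0 → ℝ) (k : Fin (d0 * 4)) : ℝ :=
  gadgetHidden p q (xr (finProdFinEquiv.symm k).1) (finProdFinEquiv.symm k).2

def networkCode (p q : ℕ) {d0 : ℕ} (xr : Fin d0 → ℝ) (i : Fin (d0 * 4)) : ℝ :=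
  gadgetCode p q (xr (finProdFinEquiv.symm i).1) (finProdFinEquiv.symm i).2

section Network

variable {d0 : ℕ} {xr : Fin d0 → ℝ}

lemma layerOne_mem (he : 2 ≤ emax q) (i : Fin (d0 * 4)) (k : Fin d0) :
    layerOne d0 i k ∈ Fset p q := by
  unfold layerOne
  split_ifs
  exacts [gadgetIn_mem he _, zero_mem_Fset (by omega)]

lemma layerTwo_mem (he : 1 ≤ emax q) (i k : Fin (d0 * 4)) : layerTwo d0 i k ∈ Fset p q := by
  unfold layerTwo
  split_ifs
  exacts [gadgetOut_mem he _ _, zero_mem_Fset he]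

lemma exactRow_layerOne (he : 2 ≤ emax q) (hxr : ∀ k, xr k ∈ Fset p q) (i : Fin (d0 * 4)) :
    ExactRow p q (layerOne d0) 0 (fun k => .fin (xr k)) i
      (nearest p q (gadgetIn (finProdFinEquiv.symm i).2 * xr (finProdFinEquiv.symm i).1)) := by
  have he₁ : 1 ≤ emax q := by omega
  obtain ⟨⟨j, s⟩, rfl⟩ := finProdFinEquiv.surjective i
  simp only [Equiv.symm_apply_apply]
  have hτ := (nearest_roundsTo (exists_roundsTo_gadgetIn_mul he₁ (hxr j) s)).1
  refine ⟨fun k => if j = k then nearest p q (gadgetIn s * xr j) else 0, fun k => ?_,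
    subsetSumsMem_ite_eq he₁ j hτ, by simp, hτ⟩
  show rnd p q (layerOne d0 _ k * xr k) = .fin (if j = k then _ else 0)
  simp only [layerOne, Equiv.symm_apply_apply]
  split_ifs with h
  · subst h
    refine rnd_eq_fin_nearest ?_
    calc |gadgetIn s * xr j| = |gadgetIn s| * |xr j| := abs_mul _ _
      _ ≤ 1 * |xr j| := by gcongr; exact abs_gadgetIn_le_one s
      _ ≤ Omega p q := by rw [one_mul]; exact abs_le_Omega (hxr j)
  · rw [zero_mul]
    exact rnd_of_mem (zero_mem_Fset he₁)

lemma exactRow_layerTwo (he : 1 ≤ emax q) (hxr : ∀ k, xr k ∈ Fset p q) (i : Fin (d0 * 4)) :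
    ExactRow p q (layerTwo d0) 0 (fun k => .fin (networkHidden p q xr k)) i
      (networkCode p q xr i) := by
  obtain ⟨⟨j, r⟩, rfl⟩ := finProdFinEquiv.surjective i
  set g : Fin d0 × Fin 4 → ℝ := fun k =>
    if j = k.1 then gadgetOut r k.2 * gadgetHidden p q (xr j) k.2 else 0
  have hS : SubsetSumsMem p q (g ∘ finProdFinEquiv.symm) :=
    ((subsetSumsMem_gadgetOut_mul he (hxr j) r).ite_fst j).comp_embedding
      finProdFinEquiv.symm.toEmbedding
  simp only [networkCode, Equiv.symm_apply_apply]
  refine ⟨g ∘ finProdFinEquiv.symm, fun k => ?_, hS, ?_, (gadgetCode_bounds he (hxr j) r).1⟩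
  · show rnd p q _ = _
    rw [← rnd_of_mem (hS.mem k)]
    simp only [layerTwo, networkHidden, Equiv.symm_apply_apply, Function.comp, g]
    split_ifs with h
    · rw [← h]
    · rw [zero_mul]
  · rw [add_zero, Function.comp_def, Equiv.sum_comp finProdFinEquiv.symm g]
    exact sum_ite_fst (fun s => gadgetOut r s * gadgetHidden p q (xr j) s) j

lemma frelu_layerOne (he : 2 ≤ emax q) (hxr : ∀ k, xr k ∈ Fset p q) :
    (fun k => frelu p q (affApply p q (layerOne d0) 0 (fun k => .fin (xr k)) k)) =
      fun k => .fin (networkHidden p q xr k) := by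
  funext k
  rw [(exactRow_layerOne he hxr k).affApply_eq,
    frelu_fin_of_mem (gadgetHidden_mem (by omega) (hxr _) _)]
  rfl

lemma frelu_layerTwo (he : 1 ≤ emax q) (hxr : ∀ k, xr k ∈ Fset p q) (i : Fin (d0 * 4)) :
    frelu p q (affApply p q (layerTwo d0) 0 (fun k => .fin (networkHidden p q xr k)) i) =
      .fin (networkCode p q xr i) := by
  obtain ⟨hmem, h0, -⟩ : networkCode p q xr i ∈ Fset p q ∧ 0 ≤ networkCode p q xr i ∧ _ :=
    gadgetCode_bounds he (hxr _) _
  rw [(exactRow_layerTwo he hxr i).affApply_eq, frelu_fin_of_mem (by rwa [max_eq_left h0]),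
    max_eq_left h0]

end Network

end

end FPT

theorem stmt16_general (p q : ℕ) (hpq : (p : ℤ) ≤ 2 ^ (q - 1) - 3) (d0 : ℕ) :
    ∃ (d1 d2 : ℕ) (W1 : Fin d1 → Fin d0 → ℝ) (c1 : ℝ) (W2 : Fin d2 → Fin d1 → ℝ) (c2 : ℝ),
      (∀ i j, W1 i j ∈ FPT.Fset p q) ∧ c1 ∈ FPT.Fset p q ∧
      (∀ i j, W2 i j ∈ FPT.Fset p q) ∧ c2 ∈ FPT.Fset p q ∧
      (let f : (Fin d0 → FPT.EF) → Fin d2 → FPT.EF := fun x i =>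
        FPT.frelu p q (FPT.affApply p q W2 c2
          (fun j => FPT.frelu p q (FPT.affApply p q W1 c1 x j)) i)
      (∀ x y : Fin d0 → FPT.EF, FPT.VecFin p q x → FPT.VecFin p q y → f x = f y → x = y) ∧
      (∀ x : Fin d0 → FPT.EF, FPT.VecFin p q x → ∀ i : Fin d2,
        ∃ r : ℝ, f x i = .fin r ∧ r ∈ FPT.Fset p q ∧ 0 ≤ r ∧ r ≤ (2 : ℝ) ^ FPT.emax q) ∧
      (∀ x : Fin d0 → FPT.EF, FPT.VecFin p q x →
        FPT.AffIntermFin p q W1 c1 x ∧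
        FPT.AffIntermFin p q W2 c2 (fun j => FPT.frelu p q (FPT.affApply p q W1 c1 x j)))) := by
  open FPT in
  have he : 2 ≤ emax q := by unfold emax; omega
  have he₁ : 1 ≤ emax q := by omega
  refine ⟨d0 * 4, d0 * 4, layerOne d0, 0, layerTwo d0, 0, layerOne_mem he, zero_mem_Fset he₁,
    layerTwo_mem he₁, zero_mem_Fset he₁, ?_⟩
  dsimp only
  refine ⟨fun x y hx hy hxy => ?_, fun x hx i => ?_, fun x hx => ?_⟩
  · obtain ⟨xr, hxr, rfl⟩ := hx.exists_eq_fin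
    obtain ⟨yr, hyr, rfl⟩ := hy.exists_eq_fin
    simp only [frelu_layerOne he hxr, frelu_layerOne he hyr, frelu_layerTwo he₁ hxr,
      frelu_layerTwo he₁ hyr] at hxy
    funext j
    congr 1
    refine gadgetCode_injOn (hxr j) (hyr j) (funext fun r => ?_)
    simpa [networkCode] using congrFun hxy (finProdFinEquiv (j, r))
  · obtain ⟨xr, hxr, rfl⟩ := hx.exists_eq_fin
    rw [frelu_layerOne he hxr, frelu_layerTwo he₁ hxr]
    exact ⟨_, rfl, gadgetCode_bounds he₁ (hxr _) _⟩
  · obtain ⟨xr, hxr, rfl⟩ := hx.exists_eq_fin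
    rw [frelu_layerOne he hxr]
    exact ⟨affIntermFin_of_exactRow fun i => ⟨_, exactRow_layerOne he hxr i⟩,
      affIntermFin_of_exactRow fun i => ⟨_, exactRow_layerTwo he₁ hxr i⟩⟩

/-- Lemma `distinguish`. There is a two-layer floating-point ReLU
network that is injective on `𝔽^{d₀}`, has range in `([0, 2^emax] ∩ 𝔽)^{d₂}`, and whose
intermediate computations are all finite. -/
theorem stmt16 (p q : ℕ) (hp : 2 ≤ p) (hpq : (p : ℤ) ≤ 2 ^ (q - 1) - 3) (d0 : ℕ)
    (hd0 : 0 < d0) :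
    ∃ (d1 d2 : ℕ) (W1 : Fin d1 → Fin d0 → ℝ) (c1 : ℝ) (W2 : Fin d2 → Fin d1 → ℝ) (c2 : ℝ),
      (∀ i j, W1 i j ∈ FPT.Fset p q) ∧ c1 ∈ FPT.Fset p q ∧
      (∀ i j, W2 i j ∈ FPT.Fset p q) ∧ c2 ∈ FPT.Fset p q ∧
      (let f : (Fin d0 → FPT.EF) → Fin d2 → FPT.EF := fun x i =>
        FPT.frelu p q (FPT.affApply p q W2 c2
          (fun j => FPT.frelu p q (FPT.affApply p q W1 c1 x j)) i)
      (∀ x y : Fin d0 → FPT.EF, FPT.VecFin p q x → FPT.VecFin p q y → f x = f y → x = y) ∧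
      (∀ x : Fin d0 → FPT.EF, FPT.VecFin p q x → ∀ i : Fin d2,
        ∃ r : ℝ, f x i = .fin r ∧ r ∈ FPT.Fset p q ∧ 0 ≤ r ∧ r ≤ (2 : ℝ) ^ FPT.emax q) ∧
      (∀ x : Fin d0 → FPT.EF, FPT.VecFin p q x →
        FPT.AffIntermFin p q W1 c1 x ∧
        FPT.AffIntermFin p q W2 c2 (fun j => FPT.frelu p q (FPT.affApply p q W1 c1 x j)))) :=
  stmt16_general p q hpq d0
end
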